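/- Let σ be the surface measure on the unit sphere S^{md-1} ⊂ ℝ^{md} with the decay estimate |σ̂(ζ)| ≤ C(1+|ζ|)^{-(md-1)/2}. Then for each j ≥ 0, the Littlewood–Paley piece σ_j (with σ̂_j(ζ) = ψ(2^{-j}|ζ|)σ̂(ζ)) satisfies sup_{ξ ∈ ℝ^d} ( ∫_{ℝ^{(m-1)d}} |σ̂_j(ξ/m + η¹, …, ξ/m + η^{m-1}, ξ/m − Ση^j)|² dη )^{1/2} ≤ C' 2^{-jγ} with γ = (md-1)/2 − (m-1)d/2. -/

import Mathlib

/-! On the support of the cutoff `ψ(2^{-j}|ζ|)` we have `|ζ| ≈ 2^j`, so the decay of `σ̂` gives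
`|σ̂_j| ≲ 2^{-jα}` there, `α = (md-1)/2`. Since `ηⁱ = ρⁱ - ξ/m` and `ξ/m` is the average of the
blocks of `ρ = ρ(ξ,η)`, we have `|η| ≲ |ρ|`, so the fiber meets the support of `σ̂_j` in a ball of
radius `≲ 2^j` in `ℝ^{(m-1)d}`. Hence the integral is `≲ 2^{-2jα} 2^{j(m-1)d}`, uniformly in `ξ`. -/

open MeasureTheory Real Set

noncomputable section

/-- `ℝ^d` with its Euclidean structure. -/
abbrev E (d : ℕ) : Type := EuclideanSpace ℝ (Fin d)

/-- The parametrization `ρ(ξ,η) = (ξ/m + η¹, …, ξ/m + η^{m-1}, ξ/m − Σᵢ ηⁱ)` of the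
anti-diagonal fiber through `(ξ/m, …, ξ/m)` in `(ℝ^{md})*`, with
`η = (η¹,…,η^{m-1}) ∈ ℝ^{(m-1)d}`. -/
def rho (m d : ℕ) (ξ : E d) (η : EuclideanSpace ℝ (Fin (m - 1) × Fin d)) :
    EuclideanSpace ℝ (Fin m × Fin d) :=
  (EuclideanSpace.equiv (Fin m × Fin d) ℝ).symm fun p =>
    if h : (p.1 : ℕ) < m - 1 then ξ p.2 / m + η (⟨p.1, h⟩, p.2)
    else ξ p.2 / m - ∑ i : Fin (m - 1), η (i, p.2)

open Metric

section LittlewoodPaley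

variable {F : Type*} [NormedAddCommGroup F]

/-- The Littlewood–Paley piece `σ̂_j = ψ(2^{-j}|·|) σ̂` at frequency scale `s = 2^j`. -/
def lpPiece (ψ : ℝ → ℝ) (S : F → ℂ) (s : ℝ) (ζ : F) : ℂ := ψ (s⁻¹ * ‖ζ‖) * S ζ

variable {ψ : ℝ → ℝ} {S : F → ℂ} {s : ℝ}

lemma norm_mem_Icc_of_lpPiece_ne_zero (hψ : ∀ x, x ∉ Icc (1 / 2 : ℝ) 4 → ψ x = 0) (hs : 0 < s)
    {ζ : F} (h : lpPiece ψ S s ζ ≠ 0) : ‖ζ‖ ∈ Icc (s / 2) (4 * s) := by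
  have hmem : s⁻¹ * ‖ζ‖ ∈ Icc (1 / 2 : ℝ) 4 := by
    by_contra hnot
    exact h (by rw [lpPiece, hψ _ hnot, Complex.ofReal_zero, zero_mul])
  obtain ⟨hlo, hhi⟩ := hmem
  rw [le_inv_mul_iff₀ hs] at hlo
  rw [inv_mul_le_iff₀ hs] at hhi
  constructor <;> linarith

lemma norm_lpPiece_le {C α : ℝ} (hψ : ∀ x, x ∉ Icc (1 / 2 : ℝ) 4 → ψ x = 0)
    (hψ_le : ∀ x, |ψ x| ≤ 1) (hS : ∀ ζ, ‖S ζ‖ ≤ C * (1 + ‖ζ‖) ^ (-α)) (hC : 0 ≤ C) (hα : 0 ≤ α)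
    (hs : 0 < s) (ζ : F) : ‖lpPiece ψ S s ζ‖ ≤ C * (s / 2) ^ (-α) := by
  by_cases h : lpPiece ψ S s ζ = 0
  · rw [h, norm_zero]; positivity
  have hζ := (norm_mem_Icc_of_lpPiece_ne_zero hψ hs h).1
  calc ‖lpPiece ψ S s ζ‖ ≤ 1 * (C * (1 + ‖ζ‖) ^ (-α)) := by
        rw [lpPiece, norm_mul, Complex.norm_real, Real.norm_eq_abs]
        exact mul_le_mul (hψ_le _) (hS ζ) (norm_nonneg _) zero_le_one
    _ ≤ C * (s / 2) ^ (-α) := by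
        rw [one_mul]
        exact mul_le_mul_of_nonneg_left
          (Real.rpow_le_rpow_of_nonpos (by positivity) (by linarith) (neg_nonpos.2 hα)) hC

end LittlewoodPaley

lemma integral_le_of_norm_le_of_eq_zero_of_lt_norm {X : Type*} [NormedAddCommGroup X]
    [NormedSpace ℝ X] [FiniteDimensional ℝ X] [MeasurableSpace X] [BorelSpace X]
    (μ : Measure X) [μ.IsAddHaarMeasure] {f : X → ℝ} {c r : ℝ} (hr : 0 ≤ r)
    (hf : ∀ x, ‖f x‖ ≤ c) (hf_zero : ∀ x, r < ‖x‖ → f x = 0) :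
    ∫ x, f x ∂μ ≤ c * (r ^ Module.finrank ℝ X * μ.real (ball 0 1)) := by
  rw [← setIntegral_eq_integral_of_forall_compl_eq_zero (s := closedBall 0 r)
    fun x hx => hf_zero x (by simpa using hx), ← Measure.addHaar_real_closedBall μ 0 hr]
  exact (le_abs_self _).trans
    (norm_setIntegral_le_of_norm_le_const measure_closedBall_lt_top fun x _ => hf x)

section Fiber

variable {m d : ℕ} (ξ : E d) (η : EuclideanSpace ℝ (Fin (m - 1) × Fin d))

lemma rho_apply (p : Fin m × Fin d) :
    rho m d ξ η p = if h : (p.1 : ℕ) < m - 1 then ξ p.2 / m + η (⟨p.1, h⟩, p.2)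
      else ξ p.2 / m - ∑ i : Fin (m - 1), η (i, p.2) := rfl

lemma sum_rho_apply (hm : 1 ≤ m) (k : Fin d) : ∑ p : Fin m, rho m d ξ η (p, k) = ξ k := by
  obtain ⟨n, rfl⟩ : ∃ n, m = n + 1 := ⟨m - 1, by omega⟩
  simp only [Fin.sum_univ_castSucc, rho_apply, Fin.val_castSucc, add_tsub_cancel_right, Fin.is_lt,
    ↓reduceDIte, Nat.cast_add, Nat.cast_one, Nat.add_one_sub_one, Fin.eta, Finset.sum_add_distrib,
    Finset.sum_const, Finset.card_univ, Fintype.card_fin, nsmul_eq_mul, Fin.val_last,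
    lt_self_iff_false, add_add_sub_cancel]
  field_simp

lemma abs_apply_le_two_mul_norm_rho (hm : 1 ≤ m) (q : Fin (m - 1) × Fin d) :
    |η q| ≤ 2 * ‖rho m d ξ η‖ := by
  set ρ := rho m d ξ η
  have hmean : |ξ q.2 / m| ≤ ‖ρ‖ := by
    rw [← sum_rho_apply ξ η hm q.2, abs_div, Nat.abs_cast, div_le_iff₀ (by positivity)]
    calc |∑ p, ρ (p, q.2)| ≤ ∑ _p : Fin m, ‖ρ‖ :=
          (Finset.abs_sum_le_sum_abs _ _).trans
            (Finset.sum_le_sum fun p _ => by simpa using PiLp.norm_apply_le ρ (p, q.2))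
      _ = ‖ρ‖ * m := by simp [mul_comm]
  have hq : η q = ρ (⟨q.1, by omega⟩, q.2) - ξ q.2 / m := by simp [ρ, rho_apply]
  rw [hq]
  calc _ ≤ |ρ _| + |ξ q.2 / m| := abs_sub _ _
    _ ≤ ‖ρ‖ + ‖ρ‖ := add_le_add (by simpa using PiLp.norm_apply_le ρ _) hmean
    _ = 2 * ‖ρ‖ := by ring

lemma norm_le_sqrt_mul_norm_rho (hm : 1 ≤ m) :
    ‖η‖ ≤ √((m - 1) * d : ℕ) * (2 * ‖rho m d ξ η‖) := by
  have := (EuclideanSpace.basisFun _ ℝ).norm_le_card_mul_iSup_norm_inner η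
  simp only [EuclideanSpace.basisFun_inner, Fintype.card_prod, Fintype.card_fin] at this
  refine this.trans (mul_le_mul_of_nonneg_left (Real.iSup_le (fun q => ?_) (by positivity))
    (by positivity))
  simpa using abs_apply_le_two_mul_norm_rho ξ η hm q

lemma integral_norm_lpPiece_rho_sq_le {S : EuclideanSpace ℝ (Fin m × Fin d) → ℂ} {ψ : ℝ → ℝ}
    {C α s : ℝ} (hm : 1 ≤ m) (hψ : ∀ x, x ∉ Icc (1 / 2 : ℝ) 4 → ψ x = 0)
    (hψ_le : ∀ x, |ψ x| ≤ 1) (hS : ∀ ζ, ‖S ζ‖ ≤ C * (1 + ‖ζ‖) ^ (-α)) (hC : 0 ≤ C)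
    (hα : 0 ≤ α) (hs : 0 < s) :
    ∫ η : EuclideanSpace ℝ (Fin (m - 1) × Fin d), ‖lpPiece ψ S s (rho m d ξ η)‖ ^ 2 ≤
      (C * (s / 2) ^ (-α)) ^ 2 * ((8 * √((m - 1) * d : ℕ) * s) ^ ((m - 1) * d) *
        volume.real (ball (0 : EuclideanSpace ℝ (Fin (m - 1) × Fin d)) 1)) := by
  have h := integral_le_of_norm_le_of_eq_zero_of_lt_norm volume
    (f := fun η => ‖lpPiece ψ S s (rho m d ξ η)‖ ^ 2) (c := (C * (s / 2) ^ (-α)) ^ 2)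
    (r := 8 * √((m - 1) * d : ℕ) * s) (by positivity) (fun η => ?_) (fun η hη => ?_)
  · simpa [finrank_euclideanSpace] using h
  · rw [norm_pow, norm_norm]
    exact pow_le_pow_left₀ (norm_nonneg _) (norm_lpPiece_le hψ hψ_le hS hC hα hs _) 2
  · by_contra hne
    have hne' : lpPiece ψ S s (rho m d ξ η) ≠ 0 := fun h0 => hne (by simp [h0])
    have hρ := (norm_mem_Icc_of_lpPiece_ne_zero hψ hs hne').2
    have hη' := (norm_le_sqrt_mul_norm_rho ξ η hm).trans
      (mul_le_mul_of_nonneg_left (by linarith : 2 * ‖rho m d ξ η‖ ≤ 8 * s) (Real.sqrt_nonneg _))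
    linarith

end Fiber

lemma sqrt_sq_mul_rpow_neg_mul_pow_mul {C A V s : ℝ} (hC : 0 ≤ C) (hA : 0 ≤ A) (hV : 0 ≤ V)
    (hs : 0 < s) (α : ℝ) (N : ℕ) :
    √((C * (s / 2) ^ (-α)) ^ 2 * ((A * s) ^ N * V)) =
      C * 2 ^ α * √(A ^ N * V) * s ^ (-(α - N / 2)) := by
  rw [Real.sqrt_eq_iff_eq_sq (by positivity) (by positivity)]
  have hhalf : (s ^ ((N : ℝ) / 2)) ^ 2 = s ^ N := by
    rw [← Real.rpow_natCast _ 2, ← Real.rpow_mul hs.le, ← Real.rpow_natCast]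
    norm_num
  rw [Real.div_rpow hs.le zero_le_two, Real.rpow_neg zero_le_two, div_inv_eq_mul, neg_sub,
    sub_eq_add_neg, add_comm, Real.rpow_add hs]
  simp only [mul_pow]
  rw [hhalf, Real.sq_sqrt (by positivity)]
  ring

/-- Littlewood–Paley decay of the spherical measure in the mixed norm `Λ^{H₀}_{2,∞}`:
if `σ̂` satisfies `|σ̂(ζ)| ≤ C (1+|ζ|)^{-(md-1)/2}` (the sphere `S^{md-1}` decay) and `ψ` is a
bump supported in `[1/2, 4]`, then the Littlewood–Paley pieces
`σ̂_j(ζ) = ψ(2^{-j}|ζ|) σ̂(ζ)` satisfy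
`sup_ξ (∫_{ℝ^{(m-1)d}} |σ̂_j(ρ(ξ,η))|² dη)^{1/2} ≤ C' 2^{-jγ}`,
`γ = (md-1)/2 − (m-1)d/2`. -/
theorem stmt12 (m d : ℕ) (hm : 2 ≤ m) (hd : 1 ≤ d)
    (S : EuclideanSpace ℝ (Fin m × Fin d) → ℂ) (C : ℝ) (hC : 0 ≤ C)
    (hdecay : ∀ ζ, ‖S ζ‖ ≤ C * (1 + ‖ζ‖) ^ (-(((m * d : ℕ) : ℝ) - 1) / 2))
    (ψ : ℝ → ℝ) (hψsupp : ∀ x, x ∉ Icc (1 / 2 : ℝ) 4 → ψ x = 0) (hψbd : ∀ x, |ψ x| ≤ 1)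
    (γ : ℝ) (hγ : γ = (((m * d : ℕ) : ℝ) - 1) / 2 - ((m : ℝ) - 1) * d / 2) :
    ∃ C' : ℝ, 0 < C' ∧
      ∀ (j : ℕ) (ξ : E d),
        (∫ η : EuclideanSpace ℝ (Fin (m - 1) × Fin d),
            ‖((ψ ((2 : ℝ) ^ (-(j : ℝ)) * ‖rho m d ξ η‖) : ℝ) : ℂ) * S (rho m d ξ η)‖ ^ 2) ^
          ((1 : ℝ) / 2) ≤ C' * 2 ^ (-(j : ℝ) * γ) := by
  have hm1 : 1 ≤ m := by omega
  set α : ℝ := (((m * d : ℕ) : ℝ) - 1) / 2 with hα_def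
  set N : ℕ := (m - 1) * d with hN_def
  have hα : 0 ≤ α := by
    have : (2 : ℝ) ≤ (m * d : ℕ) := by exact_mod_cast hm.trans (Nat.le_mul_of_pos_right m hd)
    rw [hα_def]
    linarith
  have hS : ∀ ζ, ‖S ζ‖ ≤ C * (1 + ‖ζ‖) ^ (-α) := fun ζ => by simpa only [neg_div] using hdecay ζ
  have hγN : γ = α - N / 2 := by rw [hγ, hN_def]; push_cast [Nat.cast_sub hm1]; ring
  set V := volume.real (ball (0 : EuclideanSpace ℝ (Fin (m - 1) × Fin d)) 1)
  set K := C * 2 ^ α * √((8 * √(N : ℝ)) ^ N * V)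
  refine ⟨K + 1, by positivity, fun j ξ => ?_⟩
  have hs : (0 : ℝ) < 2 ^ (j : ℝ) := by positivity
  rw [neg_mul, ← mul_neg, Real.rpow_mul zero_le_two, Real.rpow_neg zero_le_two,
    ← Real.sqrt_eq_rpow]
  calc _ ≤ √((C * (2 ^ (j : ℝ) / 2) ^ (-α)) ^ 2 * ((8 * √(N : ℝ) * 2 ^ (j : ℝ)) ^ N * V)) :=
        Real.sqrt_le_sqrt (integral_norm_lpPiece_rho_sq_le ξ hm1 hψsupp hψbd hS hC hα hs)
    _ = K * (2 ^ (j : ℝ)) ^ (-γ) := by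
        rw [sqrt_sq_mul_rpow_neg_mul_pow_mul hC (by positivity) (by positivity) hs, hγN]
    _ ≤ (K + 1) * (2 ^ (j : ℝ)) ^ (-γ) := by gcongr; linarith
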